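/- arXiv:2003.01365 — 3 statements merged into one kernel-verified Lean document; each statement's English description precedes it below -/
import Mathlib

section
/- Given ν ≥ 1, k ∈ ℤ and a ∈ ℓ¹_ν (extended symmetrically to ℤ), the linear functional l_a^k(h) = ∑_{k₁+k₂=k} a_{k₁} h_{k₂} on ℓ¹_ν is bounded with operator norm at most sup_{j∈ℤ} |a_{k-j}|/ν^{|j|}. -/
/-- The weighted ℓ¹ norm `‖a‖_ν = |a 0| + 2 ∑_{n ≥ 1} |a n| ν^n`. -/
noncomputable def wnorm (ν : ℝ) (a : ℕ → ℝ) : ℝ :=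
  |a 0| + 2 * ∑' n : ℕ, |a (n + 1)| * ν ^ (n + 1)

/-- Symmetric extension of a sequence to the integers: `a_{-n} = a_n`. -/
def symExt (a : ℕ → ℝ) : ℤ → ℝ := fun k => a k.natAbs

/-!
Weighting each term by `ν ^ |j|`, the bound is a weighted Hölder (ℓ^∞–ℓ¹) inequality:
`|a_{k-j} h_j| ≤ (|a_{k-j}| / ν^|j|) · |h_j| ν^|j|`, and summing the weighted `|h_j|` over `ℤ`
gives exactly `‖h‖_ν`, since every index `n ≥ 1` is hit twice, by `j = n` and `j = -n`.
-/

lemma hasSum_comp_natAbs {b : ℕ → ℝ} (hb : Summable b) :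
    HasSum (fun j : ℤ => b j.natAbs) (b 0 + 2 * ∑' n, b (n + 1)) := by
  have hpos : HasSum (fun n : ℕ => b ((n : ℤ) + 1).natAbs) (∑' n, b (n + 1)) :=
    ((summable_nat_add_iff 1).mpr hb).hasSum
  have hneg : HasSum (fun n : ℕ => b (-((n : ℤ) + 1)).natAbs) (∑' n, b (n + 1)) := by
    simpa only [Int.natAbs_neg] using hpos
  convert HasSum.of_add_one_of_neg_add_one (f := fun j : ℤ => b j.natAbs) hpos hneg using 1
  rw [Int.natAbs_zero]; ring

lemma abs_tsum_mul_le_iSup_div_mul {ι : Type*} {f g w : ι → ℝ} {S : ℝ} (hw : ∀ i, 0 < w i)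
    (hbd : BddAbove (Set.range fun i => |f i| / w i)) (hg : HasSum (fun i => |g i| * w i) S) :
    |∑' i, f i * g i| ≤ (⨆ i, |f i| / w i) * S := by
  refine tsum_of_norm_bounded (f := fun i => f i * g i) (hg.mul_left _) fun i => ?_
  have hf : |f i| ≤ (⨆ i, |f i| / w i) * w i := (div_le_iff₀ (hw i)).mp (le_ciSup hbd i)
  calc ‖f i * g i‖ = |f i| * |g i| := by rw [Real.norm_eq_abs, abs_mul]
    _ ≤ (⨆ i, |f i| / w i) * w i * |g i| := by gcongr
    _ = (⨆ i, |f i| / w i) * (|g i| * w i) := by ring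

theorem stmt3_general (ν : ℝ) (hν : 1 ≤ ν) (k : ℤ) (a : ℕ → ℝ)
    (hbd : BddAbove (Set.range fun j : ℤ => |symExt a (k - j)| / ν ^ j.natAbs)) :
    ∀ h : ℕ → ℝ, Summable (fun n : ℕ => |h n| * ν ^ n) →
      |∑' j : ℤ, symExt a (k - j) * symExt h j| ≤
        (⨆ j : ℤ, |symExt a (k - j)| / ν ^ j.natAbs) * wnorm ν h := by
  intro h hh
  refine abs_tsum_mul_le_iSup_div_mul (fun j => pow_pos (by linarith) _) hbd ?_
  simpa only [symExt, wnorm, pow_zero, mul_one] using hasSum_comp_natAbs hh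

theorem stmt3 (ν : ℝ) (hν : 1 ≤ ν) (k : ℤ) (a : ℕ → ℝ)
    (ha : Summable (fun n : ℕ => |a n| * ν ^ n))
    (hbd : BddAbove (Set.range fun j : ℤ => |symExt a (k - j)| / ν ^ j.natAbs)) :
    ∀ h : ℕ → ℝ, Summable (fun n : ℕ => |h n| * ν ^ n) →
      |∑' j : ℤ, symExt a (k - j) * symExt h j| ≤
        (⨆ j : ℤ, |symExt a (k - j)| / ν ^ j.natAbs) * wnorm ν h :=
  stmt3_general ν hν k a hbd
end

section
/- Assume for all λ ∈ [0, λ*] the eigenvalues of the Sturm–Liouville operator A(λ)u = −u'' − (2λ/(1+u_λ)³)u on H²₀([−π/2, π/2]) satisfy 2λ ≤ k² − μ_k(λ) ≤ 9λ. If p, q, k are positive integers with pj/q ≠ k for a given positive integer j, and λ ∈ [ε, λ*], then the hyperbolic eigenvalue μ_{j,k}(λ, p/q) = −(pj/q)² + μ_k(λ) satisfies |μ_{j,k}(λ, p/q)| ≥ (pj/q + k)/q − 9λ. -/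
/-!
Write `x = pj/q`. Since `x` is a fraction with denominator `q` different from the integer `k`,
`|x - k| ≥ 1/q`, hence `|k² - x²| = |x - k| (x + k) ≥ (x + k)/q`. The eigenvalue
`-x² + μ_k(λ)` differs from `k² - x²` by `k² - μ_k(λ) ∈ [2λ, 9λ]`, which costs at most `9λ`.
-/

lemma one_div_le_abs_div_sub_of_ne {q : ℕ} (hq : 0 < q) {m n : ℤ} (h : (m : ℝ) / q ≠ n) :
    1 / (q : ℝ) ≤ |(m : ℝ) / q - n| := by
  have hq' : (0 : ℝ) < q := by exact_mod_cast hq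
  have hmn : m - n * q ≠ 0 := by
    rintro hzero
    apply h
    rw [div_eq_iff hq'.ne']
    exact_mod_cast sub_eq_zero.mp hzero
  have hsub : (m : ℝ) / q - n = ((m - n * q : ℤ) : ℝ) / q := by
    push_cast
    field_simp
  rw [hsub, abs_div, Nat.abs_cast]
  gcongr
  exact_mod_cast Int.one_le_abs hmn

lemma mul_le_abs_sq_sub_sq {x y r : ℝ} (hxy : 0 ≤ x + y) (hr : r ≤ |x - y|) :
    r * (x + y) ≤ |y ^ 2 - x ^ 2| := by
  have hfactor : y ^ 2 - x ^ 2 = -((x - y) * (x + y)) := by ring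
  rw [hfactor, abs_neg, abs_mul, abs_of_nonneg hxy]
  exact mul_le_mul_of_nonneg_right hr hxy

lemma sub_le_abs_sub_of_abs_le {a d c : ℝ} (hd : |d| ≤ c) : |a| - c ≤ |a - d| :=
  calc |a| - c ≤ |a| - |d| := by linarith
    _ ≤ |a - d| := abs_sub_abs_le_abs_sub a d

theorem stmt7_general (lamStar ε : ℝ) (hε : 0 < ε)
    (μ : ℕ → ℝ → ℝ)
    (hest : ∀ k : ℕ, 0 < k → ∀ lam ∈ Set.Icc (0 : ℝ) lamStar,
      2 * lam ≤ (k : ℝ) ^ 2 - μ k lam ∧ (k : ℝ) ^ 2 - μ k lam ≤ 9 * lam)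
    (p q j k : ℕ) (hq : 0 < q) (hk : 0 < k)
    (hne : (p : ℝ) * j / q ≠ (k : ℝ))
    (lam : ℝ) (hlam : lam ∈ Set.Icc ε lamStar) :
    ((p : ℝ) * j / q + k) / q - 9 * lam ≤ |(-(((p : ℝ) * j / q) ^ 2) + μ k lam)| := by
  set x : ℝ := (p : ℝ) * j / q
  have hgap : 1 / (q : ℝ) ≤ |x - k| := by
    have := one_div_le_abs_div_sub_of_ne hq (m := p * j) (n := k) (by push_cast; exact hne)
    push_cast at this
    exact this
  have hsq : (x + k) / q ≤ |(k : ℝ) ^ 2 - x ^ 2| := by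
    rw [div_eq_mul_one_div, mul_comm]
    exact mul_le_abs_sq_sub_sq (by positivity) hgap
  obtain ⟨hlower, hupper⟩ := hest k hk lam ⟨hε.le.trans hlam.1, hlam.2⟩
  have hshift : |(k : ℝ) ^ 2 - μ k lam| ≤ 9 * lam := abs_le.mpr ⟨by linarith, hupper⟩
  calc (x + k) / q - 9 * lam ≤ |(k : ℝ) ^ 2 - x ^ 2| - 9 * lam := by linarith
    _ ≤ |(k : ℝ) ^ 2 - x ^ 2 - ((k : ℝ) ^ 2 - μ k lam)| := sub_le_abs_sub_of_abs_le hshift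
    _ = |-x ^ 2 + μ k lam| := by ring_nf

theorem stmt7 (lamStar ε : ℝ) (hls : 0 < lamStar) (hε : 0 < ε) (hεls : ε ≤ lamStar)
    (μ : ℕ → ℝ → ℝ)
    (hest : ∀ k : ℕ, 0 < k → ∀ lam ∈ Set.Icc (0 : ℝ) lamStar,
      2 * lam ≤ (k : ℝ) ^ 2 - μ k lam ∧ (k : ℝ) ^ 2 - μ k lam ≤ 9 * lam)
    (p q j k : ℕ) (hp : 0 < p) (hq : 0 < q) (hj : 0 < j) (hk : 0 < k)
    (hne : (p : ℝ) * j / q ≠ (k : ℝ))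
    (lam : ℝ) (hlam : lam ∈ Set.Icc ε lamStar) :
    ((p : ℝ) * j / q + k) / q - 9 * lam ≤ |(-(((p : ℝ) * j / q) ^ 2) + μ k lam)| :=
  stmt7_general lamStar ε hε μ hest p q j k hq hk hne lam hlam
end

section
/- Let ν ≥ 1, m ∈ ℕ, and let ᾱ ∈ ℓ¹_ν be a sequence with ᾱ_n = 0 for n > N (extended symmetrically to ℤ). For 0 ≤ k < m, define the functional l̂(h) = ∑_{k₁+k₂=k, |k₂| ≥ m} ᾱ_{k₁} h_{k₂} acting on h extended symmetrically. Then for all h ∈ ℓ¹_ν with ‖h‖_ν ≤ 1, |l̂(h)| ≤ max_{j=m,…,k+m-1} |ᾱ_{k−j} + ᾱ_{k+j}|/(2ν^j), where ᾱ with index of absolute value exceeding N is zero. -/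
section WeightedL1

variable {ν : ℝ} {h : ℕ → ℝ}

lemma two_mul_sum_abs_mul_pow_le_wnorm (hν : 0 ≤ ν) (hsum : Summable fun n => |h n| * ν ^ n)
    {s : Finset ℕ} (hs : 0 ∉ s) : 2 * ∑ n ∈ s, |h n| * ν ^ n ≤ wnorm ν h := by
  have hle : ∑ n ∈ insert 0 s, |h n| * ν ^ n ≤ ∑' n, |h n| * ν ^ n :=
    hsum.sum_le_tsum _ fun n _ => by positivity
  rw [Finset.sum_insert hs, hsum.tsum_eq_zero_add] at hle
  unfold wnorm
  linarith [abs_nonneg (h 0)]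

lemma abs_sum_mul_le_mul_wnorm (hν : 0 ≤ ν) (hsum : Summable fun n => |h n| * ν ^ n)
    {s : Finset ℕ} (hs : 0 ∉ s) {a : ℕ → ℝ} {C : ℝ} (hC : 0 ≤ C)
    (ha : ∀ j ∈ s, |a j| ≤ C * (2 * ν ^ j)) :
    |∑ j ∈ s, a j * h j| ≤ C * wnorm ν h :=
  calc |∑ j ∈ s, a j * h j| ≤ ∑ j ∈ s, |a j| * |h j| := by
        simpa only [abs_mul] using Finset.abs_sum_le_sum_abs (fun j => a j * h j) s
    _ ≤ ∑ j ∈ s, C * (2 * ν ^ j) * |h j| :=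
        Finset.sum_le_sum fun j hj => mul_le_mul_of_nonneg_right (ha j hj) (abs_nonneg _)
    _ = C * (2 * ∑ j ∈ s, |h j| * ν ^ j) := by
        rw [Finset.mul_sum, Finset.mul_sum]
        exact Finset.sum_congr rfl fun j _ => by ring
    _ ≤ C * wnorm ν h :=
        mul_le_mul_of_nonneg_left (two_mul_sum_abs_mul_pow_le_wnorm hν hsum hs) hC

end WeightedL1

section Truncation

variable {m N : ℕ} {α : ℕ → ℝ}

lemma symExt_eq_zero (hα : ∀ n : ℕ, N < n → α n = 0) {i : ℤ} (hi : (N : ℤ) < |i|) :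
    symExt α i = 0 :=
  hα _ (by rw [Int.abs_eq_natAbs] at hi; exact_mod_cast hi)

lemma tsum_tail_eq_sum_Icc (hNm : N < m) (hα : ∀ n : ℕ, N < n → α n = 0) (k : ℕ)
    (h : ℕ → ℝ) :
    ∑' k₂ : ℤ, (if m ≤ k₂.natAbs then symExt α ((k : ℤ) - k₂) * symExt h k₂ else 0) =
      ∑ j ∈ Finset.Icc m (k + N), symExt α ((k : ℤ) - j) * h j := by
  rw [tsum_eq_sum (s := (Finset.Icc m (k + N)).map Nat.castEmbedding), Finset.sum_map]
  · refine Finset.sum_congr rfl fun j hj => ?_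
    simp only [Nat.castEmbedding_apply, Int.natAbs_natCast, symExt]
    rw [if_pos (Finset.mem_Icc.mp hj).1]
  · intro k₂ hk₂
    split_ifs with hm
    · have hout : ¬ (m ≤ k₂ ∧ k₂ ≤ k + N) := by
        rintro ⟨hl, hr⟩
        refine hk₂ (Finset.mem_map.mpr ⟨k₂.toNat, Finset.mem_Icc.mpr (by omega), ?_⟩)
        simp only [Nat.castEmbedding_apply]
        omega
      rw [symExt_eq_zero hα (by rw [abs_eq_max_neg]; omega), zero_mul]
    · rfl

end Truncation

theorem stmt18_general (ν : ℝ) (hν : 1 ≤ ν) (m N : ℕ) (hNm : N < m)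
    (α : ℕ → ℝ) (hα : ∀ n : ℕ, N < n → α n = 0) (k : ℕ)
    (h : ℕ → ℝ) (hsum : Summable (fun n : ℕ => |h n| * ν ^ n))
    (hnorm : wnorm ν h ≤ 1) :
    |∑' k₂ : ℤ, (if m ≤ k₂.natAbs then symExt α ((k : ℤ) - k₂) * symExt h k₂ else 0)| ≤
      ⨆ j : {j : ℕ // m ≤ j ∧ j ≤ k + m - 1},
        |symExt α ((k : ℤ) - (j : ℕ)) + symExt α ((k : ℤ) + (j : ℕ))| /
          (2 * ν ^ (j : ℕ)) := by
  have hν0 : 0 < ν := one_pos.trans_le hν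
  set g : {j : ℕ // m ≤ j ∧ j ≤ k + m - 1} → ℝ := fun j =>
    |symExt α ((k : ℤ) - (j : ℕ)) + symExt α ((k : ℤ) + (j : ℕ))| / (2 * ν ^ (j : ℕ))
  have : Finite {j : ℕ // m ≤ j ∧ j ≤ k + m - 1} := (Set.finite_Icc m (k + m - 1)).to_subtype
  have hS : 0 ≤ ⨆ j, g j := Real.iSup_nonneg fun j => by positivity
  have hcoeff : ∀ j ∈ Finset.Icc m (k + N),
      |symExt α ((k : ℤ) - j)| ≤ (⨆ j, g j) * (2 * ν ^ j) := by
    intro j hj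
    obtain ⟨hmj, hjN⟩ := Finset.mem_Icc.mp hj
    have hle : |symExt α ((k : ℤ) - j) + symExt α ((k : ℤ) + j)| / (2 * ν ^ j) ≤ ⨆ j, g j :=
      le_ciSup (Set.finite_range g).bddAbove ⟨j, hmj, by omega⟩
    rw [symExt_eq_zero hα (i := (k : ℤ) + j) (by rw [abs_of_nonneg (by positivity)]; omega),
      add_zero, div_le_iff₀ (by positivity)] at hle
    exact hle
  rw [tsum_tail_eq_sum_Icc hNm hα]
  calc _ ≤ (⨆ j, g j) * wnorm ν h :=
        abs_sum_mul_le_mul_wnorm hν0.le hsum (by simp only [Finset.mem_Icc]; omega) hS hcoeff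
    _ ≤ ⨆ j, g j := mul_le_of_le_one_right hS hnorm

theorem stmt18 (ν : ℝ) (hν : 1 ≤ ν) (m N : ℕ) (hNm : N < m)
    (α : ℕ → ℝ) (hα : ∀ n : ℕ, N < n → α n = 0) (k : ℕ) (hk : k < m)
    (h : ℕ → ℝ) (hsum : Summable (fun n : ℕ => |h n| * ν ^ n))
    (hnorm : wnorm ν h ≤ 1) :
    |∑' k₂ : ℤ, (if m ≤ k₂.natAbs then symExt α ((k : ℤ) - k₂) * symExt h k₂ else 0)| ≤
      ⨆ j : {j : ℕ // m ≤ j ∧ j ≤ k + m - 1},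
        |symExt α ((k : ℤ) - (j : ℕ)) + symExt α ((k : ℤ) + (j : ℕ))| /
          (2 * ν ^ (j : ℕ)) :=
  stmt18_general ν hν m N hNm α hα k h hsum hnorm
end
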